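/- arXiv:2504.05462 — 2 statements merged into one kernel-verified Lean document; each statement's English description precedes it below -/
import Mathlib

section
/- Random functions (neural networks) preserve reflection positivity: let x_t be a reflection-positive stochastic process, and let φ_θ : ℝ → ℝ be a family of bounded measurable functions indexed by a parameter θ drawn from a probability distribution P(θ) independent of x_t. Then the process y_t = φ_θ(x_t), whose randomness comes both from x_t and from an independent draw of θ, is reflection positive. -/
open MeasureTheory
open scoped ComplexOrder

lemma complex_integral_nonneg {α : Type*} [MeasurableSpace α] (μ : Measure α)
    (f : α → ℂ) (h : ∀ a, 0 ≤ f a) : 0 ≤ ∫ a, f a ∂μ := by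
  have hf : ∀ a, f a = ((f a).re : ℂ) := by
    intro a
    obtain ⟨hre, him⟩ := Complex.le_def.mp (h a)
    exact Complex.ext rfl (by simpa using him.symm)
  calc (0 : ℂ) ≤ ((∫ a, (f a).re ∂μ : ℝ) : ℂ) := by
        rw [Complex.le_def]
        constructor
        · simpa using integral_nonneg fun a => by
            have := (Complex.le_def.mp (h a)).1; simpa using this
        · simp
    _ = ∫ a, ((f a).re : ℂ) ∂μ := integral_ofReal.symm
    _ = ∫ a, f a ∂μ := by simp_rw [← hf]

/-- Reflection positivity of a stochastic process. -/
def ReflectionPositive {Ω : Type*} [MeasurableSpace Ω] (μ : Measure Ω)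
    (x : ℝ → Ω → ℝ) : Prop :=
  ∀ (n : ℕ) (t : Fin n → ℝ), (∀ i, 0 < t i) →
    ∀ F : (Fin n → ℝ) → ℂ, Measurable F → (∃ C, ∀ y, ‖F y‖ ≤ C) →
    0 ≤ ∫ ω, F (fun i => x (t i) ω) * (starRingEnd ℂ) (F (fun i => x (-(t i)) ω)) ∂μ

/-- Random functions (neural networks) preserve reflection positivity: if `x_t` is a
reflection-positive process and `φ_θ : ℝ → ℝ` is a family of bounded measurable functions
with parameter `θ` drawn from a probability distribution `ν` independently of `x`, then
the process `y_t(ω,θ) = φ_θ(x_t(ω))` on the product space is reflection positive. -/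
theorem reflectionPositive_comp_randomFunction
    {Ω Θ : Type*} [MeasurableSpace Ω] [MeasurableSpace Θ]
    (μ : Measure Ω) [IsProbabilityMeasure μ] (ν : Measure Θ) [IsProbabilityMeasure ν]
    (x : ℝ → Ω → ℝ) (hRP : ReflectionPositive μ x)
    (φ : Θ → ℝ → ℝ) (hφ : Measurable (fun p : Θ × ℝ => φ p.1 p.2))
    (hbd : ∀ θ, ∃ C, ∀ y, |φ θ y| ≤ C) :
    ReflectionPositive (μ.prod ν) (fun t p => φ p.2 (x t p.1)) := by
  intro n t ht F hF ⟨C, hC⟩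
  set H : Ω × Θ → ℂ := fun p =>
    F (fun i => φ p.2 (x (t i) p.1)) * (starRingEnd ℂ) (F (fun i => φ p.2 (x (-(t i)) p.1)))
    with hH
  by_cases hint : Integrable H (μ.prod ν)
  · have := integral_prod_symm H hint
    show 0 ≤ ∫ p, H p ∂(μ.prod ν)
    rw [this]
    refine complex_integral_nonneg _ _ fun θ => ?_
    exact hRP n t ht (fun y => F (fun i => φ θ (y i)))
      (hF.comp (measurable_pi_lambda _ fun i =>
        hφ.comp (measurable_const.prodMk (measurable_pi_apply i))))
      ⟨C, fun y => hC _⟩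
  · show 0 ≤ ∫ p, H p ∂(μ.prod ν)
    rw [integral_undef hint]
end

section
/- Parameter splitting implies reflection positivity: suppose a random function φ : ℝ → ℝ is parameterized by three independent (groups of) parameters θ⁰, θ⁺, θ⁻ with joint density P(θ⁰)·P₊(θ⁰,θ⁺)·P₋(θ⁰,θ⁻), such that for t > 0 the value φ(t) depends only on (θ⁰, θ⁺) and for t < 0 it depends only on (θ⁰, θ⁻). Assume there is a measure-preserving involution θ⁻ ↦ θ'⁻ such that φ_{θ⁰,θ⁻}(−t) = φ_{θ⁰,θ'⁻}(t) for t > 0 and P₋(θ⁰,θ⁻) = P₊(θ⁰,θ'⁻). Then for any positive times t₁,...,t_n and any bounded measurable complex F, ∫ dθ P(θ) F(φ_θ(t₁),...,φ_θ(t_n)) · conj(F(φ_θ(−t₁),...,φ_θ(−t_n))) ≥ 0. -/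
open MeasureTheory
open scoped ComplexOrder

/-- Parameter splitting implies reflection positivity: suppose a random function
`φ : ℝ → ℝ` is parameterized by groups of parameters `θ⁰ ∈ A`, `θ⁺ ∈ B`, `θ⁻ ∈ B`, with
joint density `P(θ⁰)·P₊(θ⁰,θ⁺)·P₋(θ⁰,θ⁻)` with respect to base measures `μA, μB, μB`,
such that at positive times `φ` does not depend on `θ⁻` and at negative times it does not
depend on `θ⁺`; and suppose there is a measure-preserving involution `ι` of the `θ⁻`
parameters with `φ_{θ⁰,·,θ⁻}(-t) = φ_{θ⁰,ι θ⁻,·}(t)` for `t > 0` and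
`P₋(θ⁰,θ⁻) = P₊(θ⁰, ι θ⁻)`. Then for any positive times `t₁,…,tₙ` and any bounded
measurable complex `F`, the reflection-positivity expectation
`∫ dθ P(θ) F(φ_θ(t₁),…,φ_θ(tₙ)) conj(F(φ_θ(-t₁),…,φ_θ(-tₙ)))` is nonnegative. -/
theorem parameter_splitting_reflection_positive
    {A B : Type*} [MeasurableSpace A] [MeasurableSpace B]
    (μA : Measure A) (μB : Measure B) [SigmaFinite μA] [SigmaFinite μB]
    (P : A → ℝ) (Pp Pm : A → B → ℝ) (φ : A → B → B → ℝ → ℝ) (ι : B → B)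
    (hP : ∀ a, 0 ≤ P a) (hPp : ∀ a b, 0 ≤ Pp a b) (hPm : ∀ a b, 0 ≤ Pm a b)
    (hPmeas : Measurable P)
    (hPpmeas : Measurable (fun p : A × B => Pp p.1 p.2))
    (hPmmeas : Measurable (fun p : A × B => Pm p.1 p.2))
    (hφmeas : Measurable (fun q : (A × B × B) × ℝ => φ q.1.1 q.1.2.1 q.1.2.2 q.2))
    (hposdep : ∀ a bp bm bm' t, 0 < t → φ a bp bm t = φ a bp bm' t)
    (hnegdep : ∀ a bp bp' bm t, t < 0 → φ a bp bm t = φ a bp' bm t)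
    (hι : MeasurePreserving ι μB μB) (hinv : Function.Involutive ι)
    (habsorb : ∀ a bp bm t, 0 < t → φ a bp bm (-t) = φ a (ι bm) bm t)
    (hdens : ∀ a bm, Pm a bm = Pp a (ι bm)) :
    ∀ (n : ℕ) (ts : Fin n → ℝ), (∀ i, 0 < ts i) →
      ∀ F : (Fin n → ℝ) → ℂ, Measurable F → (∃ C, ∀ y, ‖F y‖ ≤ C) →
      0 ≤ ∫ q : A × B × B,
            ((P q.1 * Pp q.1 q.2.1 * Pm q.1 q.2.2 : ℝ) : ℂ) *
              (F (fun i => φ q.1 q.2.1 q.2.2 (ts i)) *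
                (starRingEnd ℂ) (F (fun i => φ q.1 q.2.1 q.2.2 (-(ts i)))))
          ∂(μA.prod (μB.prod μB)) := by

  intro n ts hts F hFmeas hFbd
  set f : A × B × B → ℂ := fun q =>
    ((P q.1 * Pp q.1 q.2.1 * Pm q.1 q.2.2 : ℝ) : ℂ) *
      (F (fun i => φ q.1 q.2.1 q.2.2 (ts i)) *
        (starRingEnd ℂ) (F (fun i => φ q.1 q.2.1 q.2.2 (-(ts i))))) with hfdef
  by_cases hint : Integrable f (μA.prod (μB.prod μB))
  · have hemb : MeasurableEmbedding ι :=
      MeasurableEquiv.measurableEmbedding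
        ⟨⟨ι, ι, hinv.leftInverse, hinv.rightInverse⟩, hι.measurable, hι.measurable⟩
    have key : ∀ a : A, ∃ r : ℝ, 0 ≤ r ∧
        (∫ p : B × B, f (a, p) ∂(μB.prod μB)) = (r : ℂ) := by
      intro a
      set G : B → ℂ := fun b => ((Pp a b : ℝ) : ℂ) * F (fun i => φ a b b (ts i)) with hGdef
      have hfa : (fun p : B × B => f (a, p)) =
          fun p : B × B => ((P a : ℝ) : ℂ) * (G p.1 * (starRingEnd ℂ) (G (ι p.2))) := by
        funext p
        obtain ⟨b, b'⟩ := p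
        have h1 : (fun i => φ a b b' (ts i)) = fun i => φ a b b (ts i) := by
          funext i; exact hposdep a b b' b (ts i) (hts i)
        have h2 : (fun i => φ a (ι b') (ι b') (ts i)) = fun i => φ a b b' (-(ts i)) := by
          funext i
          rw [habsorb a b b' (ts i) (hts i)]
          exact hposdep a (ι b') (ι b') b' (ts i) (hts i)
        simp only [hfdef, hGdef, h1, h2, hdens a b', map_mul, Complex.conj_ofReal]
        push_cast
        ring
      rw [hfa, MeasureTheory.integral_const_mul,
        MeasureTheory.integral_prod_mul (μ := μB) (ν := μB) G
          (fun b => (starRingEnd ℂ) (G (ι b))),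
        integral_conj, hι.integral_comp hemb G, Complex.mul_conj]
      refine ⟨P a * Complex.normSq (∫ b, G b ∂μB),
        mul_nonneg (hP a) (Complex.normSq_nonneg _), ?_⟩
      push_cast
      ring
    choose r hr hreq using key
    rw [MeasureTheory.integral_prod f hint,
      show (fun a => ∫ p : B × B, f (a, p) ∂(μB.prod μB)) = fun a => ((r a : ℝ) : ℂ)
        from funext hreq]
    have hro : ∫ a, ((r a : ℝ) : ℂ) ∂μA = ((∫ a, r a ∂μA : ℝ) : ℂ) := integral_ofReal
    rw [hro]
    exact Complex.zero_le_real.mpr (integral_nonneg hr)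
  · rw [integral_undef hint]
end
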